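/- In the half-construction p̂ of a process type p, every reachable marking of p̂ projects to a 'partially fired' state of p: for every reachable marking m of p̂, either m has one token in a place q of p (and m restricted to places of p is a reachable marking of p), or m has one token in some half-place ĥ_t where t is an observable transition of p whose source place is reachable in p. -/
import Mathlib


section

variable {Q TO TI : Type} [DecidableEq Q] [DecidableEq TO]

/-- marking of a net with places `P` having a single token in `p`. -/
def single {P : Type} [DecidableEq P] (p : P) : P → ℕ :=
  fun q => if q = p then 1 else 0

/-- one firing step of the process type `p`, with observable transitions `TO`
(from `preO t` to `postO t`) and internal transitions `TI`. -/
def pstep (preO postO : TO → Q) (preI postI : TI → Q) (m m' : Q → ℕ) : Prop :=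
  (∃ t : TO, 1 ≤ m (preO t) ∧
    m' = fun q => m q - (if q = preO t then 1 else 0) + (if q = postO t then 1 else 0)) ∨
  (∃ t : TI, 1 ≤ m (preI t) ∧
    m' = fun q => m q - (if q = preI t then 1 else 0) + (if q = postI t then 1 else 0))

/-- one firing step of the half-construction `p̂`: places are `Q ⊕ TO` (the
right summand being the half-places `ĥ_t`); internal transitions are kept, and
each observable `t : q → q'` is split into `try_t : q → ĥ_t` and
`commit_t : ĥ_t → q'`. -/
def hstep (preO postO : TO → Q) (preI postI : TI → Q)
    (m m' : Q ⊕ TO → ℕ) : Prop :=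
  (∃ t : TO, 1 ≤ m (Sum.inl (preO t)) ∧
    m' = fun p => m p - (if p = Sum.inl (preO t) then 1 else 0)
               + (if p = Sum.inr t then 1 else 0)) ∨
  (∃ t : TO, 1 ≤ m (Sum.inr t) ∧
    m' = fun p => m p - (if p = Sum.inr t then 1 else 0)
               + (if p = Sum.inl (postO t) then 1 else 0)) ∨
  (∃ t : TI, 1 ≤ m (Sum.inl (preI t)) ∧
    m' = fun p => m p - (if p = Sum.inl (preI t) then 1 else 0)
               + (if p = Sum.inl (postI t) then 1 else 0))

lemma single_fire {P : Type} [DecidableEq P] (a b : P) :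
    (fun p => single a p - (if p = a then 1 else 0) + (if p = b then 1 else 0))
      = single b := by
  funext p
  by_cases hpa : p = a <;> by_cases hpb : p = b <;> simp [single, hpa, hpb]

lemma single_one_le {P : Type} [DecidableEq P] {a b : P}
    (h : 1 ≤ single a b) : b = a := by
  by_contra hc
  simp [single, hc] at h

/-- every reachable marking of `p̂` projects to a partially fired
state of `p`: either one token sits in an original place `q` of `p` and the
restriction to `p`'s places is reachable in `p`, or one token sits in a
half-place `ĥ_t` for an observable transition `t` whose source place is
reachable in `p`. -/
theorem stmt14 (preO postO : TO → Q) (preI postI : TI → Q) (q₀ : Q)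
    (m : Q ⊕ TO → ℕ)
    (hreach : Relation.ReflTransGen (hstep preO postO preI postI)
      (single (Sum.inl q₀)) m) :
    (∃ q : Q, m = single (Sum.inl q) ∧
      Relation.ReflTransGen (pstep preO postO preI postI) (single q₀) (single q)) ∨
    (∃ t : TO, m = single (Sum.inr t) ∧
      Relation.ReflTransGen (pstep preO postO preI postI) (single q₀)
        (single (preO t))) := by
  induction hreach with
  | refl => exact Or.inl ⟨q₀, rfl, Relation.ReflTransGen.refl⟩
  | tail _ hstep ih =>
    rename_i b c _
    rcases ih with ⟨q, hb, hr⟩ | ⟨t, hb, hr⟩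
    · subst hb
      rcases hstep with ⟨t, h1, hc⟩ | ⟨t, h1, hc⟩ | ⟨t, h1, hc⟩
      · have hq := Sum.inl.inj (single_one_le h1)
        subst hq
        exact Or.inr ⟨t, by rw [hc, single_fire], hr⟩
      · exact absurd (single_one_le h1) (by simp)
      · have hq := Sum.inl.inj (single_one_le h1)
        refine Or.inl ⟨postI t, by rw [hc, hq, single_fire], hr.tail ?_⟩
        exact Or.inr ⟨t, by rw [hq]; simp [single], by rw [← hq, single_fire]⟩
    · subst hb
      rcases hstep with ⟨t', h1, hc⟩ | ⟨t', h1, hc⟩ | ⟨t', h1, hc⟩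
      · exact absurd (single_one_le h1) (by simp)
      · have ht := Sum.inr.inj (single_one_le h1)
        subst ht
        refine Or.inl ⟨postO t', by rw [hc, single_fire], hr.tail ?_⟩
        exact Or.inl ⟨t', by simp [single], by rw [single_fire]⟩
      · exact absurd (single_one_le h1) (by simp)

end
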